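/- Suppose ᵗΘ has an infinite best approximation sequence (y_ν) with Y_ν = max_j |y_{ν,j}| and ζ_ν = max_i ‖ᵗL_i(y_ν)‖. Let η ∈ ℝ^n and ε > 0 satisfy ‖η_1 y_{ν,1} + ... + η_n y_{ν,n}‖ ≥ ε for all ν. Let δ > 0, let r₀ ∈ (0,1) be the maximizer of r^n(1−r)^m on (0,1), and set R₀ = n·δ^{1/n}/(ε·r₀). Suppose x ∈ ℤ^m with X = max_{1≤i≤m} |x_i| satisfies (R₀·Y_ν)^{n/m} ≤ X < (R₀·Y_{ν+1})^{n/m} for some index ν, and max_{1≤j≤n} ‖L_j(x) − η_j‖ ≤ (δ/X^m)^{1/n}. Then ζ_ν^m · Y_{ν+1}^n ≥ ε^d · r₀^n · (1−r₀)^m / (m^m · n^n · δ). -/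

import Mathlib

open Filter MeasureTheory

/-- Distance from a real number `t` to the nearest integer, `‖t‖`. -/
noncomputable def distInt (t : ℝ) : ℝ := |t - round t|

/-- The system of linear forms `L_j(x) = ∑_i Θ_j^i x_i` attached to a matrix. -/
noncomputable def lform {m n : ℕ} (Θ : Matrix (Fin n) (Fin m) ℝ) (x : Fin m → ℤ) (j : Fin n) :
    ℝ := ∑ i, Θ j i * (x i : ℝ)

/-- Sup-norm `max_i |x_i|` of an integer vector, as a real number. -/
noncomputable def supAbs {k : ℕ} (x : Fin k → ℤ) : ℝ := ⨆ i, |(x i : ℝ)|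

/-- `ψ^Θ(t)`: the minimum of `max_j ‖L_j(x)‖` over nonzero integer `x` with `max_i |x_i| ≤ t`. -/
noncomputable def psi {m n : ℕ} (Θ : Matrix (Fin n) (Fin m) ℝ) (t : ℝ) : ℝ :=
  sInf { v | ∃ x : Fin m → ℤ, x ≠ 0 ∧ supAbs x ≤ t ∧ v = ⨆ j, distInt (lform Θ x j) }

/-- `ψ^{Θ,α}(t)`: the inhomogeneous analogue of `ψ^Θ(t)`. -/
noncomputable def psiA {m n : ℕ} (Θ : Matrix (Fin n) (Fin m) ℝ) (α : Fin n → ℝ) (t : ℝ) : ℝ :=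
  sInf { v | ∃ x : Fin m → ℤ, x ≠ 0 ∧ supAbs x ≤ t ∧ v = ⨆ j, distInt (lform Θ x j - α j) }

/-- `Θ` is singular: `limsup_{t→∞} t^{m/n} ψ^Θ(t) = 0`. -/
noncomputable def IsSingular {m n : ℕ} (Θ : Matrix (Fin n) (Fin m) ℝ) : Prop :=
  Filter.limsup (fun t : ℝ => ENNReal.ofReal (t ^ ((m : ℝ) / (n : ℝ)) * psi Θ t))
    Filter.atTop = 0

/-- Property (1) (Khintchine's Chebyshev property). -/
def Chebyshev1 {m n : ℕ} (Θ : Matrix (Fin n) (Fin m) ℝ) : Prop :=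
  ∀ α : Fin n → ℝ, ∃ Γ : ℝ, 0 < Γ ∧ ∀ T : ℝ, ∃ x : Fin m → ℤ,
    T ≤ supAbs x ∧
      (⨆ j, distInt (lform Θ x j - α j)) < Γ * (supAbs x) ^ (-(m : ℝ) / (n : ℝ))

/-- Property (2) (Cassels' version, with `Γ` uniform in `α`). -/
def Chebyshev2 {m n : ℕ} (Θ : Matrix (Fin n) (Fin m) ℝ) : Prop :=
  ∃ Γ : ℝ, 0 < Γ ∧ ∀ α : Fin n → ℝ, ∀ T : ℝ, ∃ x : Fin m → ℤ,
    T ≤ supAbs x ∧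
      (⨆ j, distInt (lform Θ x j - α j)) < Γ * (supAbs x) ^ (-(m : ℝ) / (n : ℝ))

/-- `y` is a sequence of best approximations associated to the system of forms of `M`
(for the forms `ᵗL_i` of a matrix `Θ`, apply this to `M = Θᵀ`). -/
def IsBestApproxSeq {p q : ℕ} (M : Matrix (Fin p) (Fin q) ℝ) (y : ℕ → Fin q → ℤ) : Prop :=
  (∀ ν, y ν ≠ 0) ∧
  StrictMono (fun ν => supAbs (y ν)) ∧
  StrictAnti (fun ν => ⨆ i, distInt (lform M (y ν) i)) ∧
  ∀ ν, ∀ z : Fin q → ℤ, z ≠ 0 → supAbs z < supAbs (y (ν + 1)) →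
    (⨆ i, distInt (lform M (y ν) i)) ≤ ⨆ i, distInt (lform M z i)

/-- The constant `K = 2^{-(d-1)} d^{-1/2} σ`, where `σ` is the `(d-1)`-dimensional Hausdorff
measure of the central section `{z ∈ [-1,1]^d : z_1 + ... + z_d = 0}` of the cube. -/
noncomputable def Kconst (d : ℕ) : ℝ :=
  ((MeasureTheory.Measure.hausdorffMeasure ((d : ℝ) - 1) :
      MeasureTheory.Measure (EuclideanSpace ℝ (Fin d)))
    {z : EuclideanSpace ℝ (Fin d) | (∀ i, |z i| ≤ 1) ∧ ∑ i, z i = 0}).toReal /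
    (2 ^ (d - 1) * Real.sqrt d)

/-- `R_{m,n} = max_{0<r<1} r^n (1-r)^m`. -/
noncomputable def Rconst (m n : ℕ) : ℝ :=
  sSup {v : ℝ | ∃ r : ℝ, 0 < r ∧ r < 1 ∧ v = r ^ n * (1 - r) ^ m}

/-- `G_{m,n}(ε) = d^d (m^m n^n)^{d(d-1)} / (ε^d K R)^{d(d-1)}` with `d = m + n`. -/
noncomputable def Gconst (m n : ℕ) (ε : ℝ) : ℝ :=
  ((m : ℝ) + n) ^ (m + n) * ((m : ℝ) ^ m * (n : ℝ) ^ n) ^ ((m + n) * (m + n - 1)) /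
    (ε ^ (m + n) * Kconst (m + n) * Rconst m n) ^ ((m + n) * (m + n - 1))

/-! Reading `∑ⱼ ηⱼ yⱼ = ∑ᵢ xᵢ ᵗLᵢ(y) - ∑ⱼ yⱼ (Lⱼ(x) - ηⱼ)` modulo `1` gives the transference
inequality `ε ≤ n Y_ν E + m X ζ_ν`, where `E = maxⱼ ‖Lⱼ(x) - ηⱼ‖`. The choice
`R₀^n (ε r₀)^n = n^n δ` together with `(R₀ Y_ν)^n ≤ X^m` and `E^n X^m ≤ δ` makes the first term
at most `ε r₀`, so `m X ζ_ν ≥ ε (1 - r₀)`; raising this to the `m`-th power and using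
`X^m ≤ (R₀ Y_{ν+1})^n` gives the bound. -/

lemma distInt_eq_norm (t : ℝ) : distInt t = ‖(t : UnitAddCircle)‖ :=
  UnitAddCircle.norm_eq.symm

lemma distInt_nonneg (t : ℝ) : 0 ≤ distInt t := abs_nonneg _

lemma distInt_sub_le (a b : ℝ) : distInt (a - b) ≤ distInt a + distInt b := by
  simpa only [distInt_eq_norm, AddCircle.coe_sub] using norm_sub_le _ _

lemma distInt_sum_le {ι : Type*} (s : Finset ι) (f : ι → ℝ) :
    distInt (∑ i ∈ s, f i) ≤ ∑ i ∈ s, distInt (f i) := by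
  simpa only [distInt_eq_norm, ← QuotientAddGroup.mk'_apply, map_sum]
    using norm_sum_le s fun i => (f i : UnitAddCircle)

lemma distInt_intCast_mul_le (k : ℤ) (t : ℝ) : distInt (k * t) ≤ |(k : ℝ)| * distInt t := by
  simpa only [distInt_eq_norm, ← zsmul_eq_mul, AddCircle.coe_zsmul, Int.norm_eq_abs]
    using norm_zsmul_le k (t : UnitAddCircle)

lemma supAbs_nonneg {k : ℕ} (z : Fin k → ℤ) : 0 ≤ supAbs z :=
  Real.iSup_nonneg fun _ => abs_nonneg _

lemma abs_le_supAbs {k : ℕ} (z : Fin k → ℤ) (i : Fin k) : |(z i : ℝ)| ≤ supAbs z :=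
  le_ciSup (f := fun i => |(z i : ℝ)|) (Finite.bddAbove_range _) i

lemma distInt_sum_intCast_mul_le {k : ℕ} (z : Fin k → ℤ) (f : Fin k → ℝ) :
    distInt (∑ i, z i * f i) ≤ k * supAbs z * ⨆ i, distInt (f i) := by
  have hle : ∀ i, distInt (z i * f i) ≤ supAbs z * ⨆ i, distInt (f i) := fun i =>
    (distInt_intCast_mul_le _ _).trans <| mul_le_mul (abs_le_supAbs z i)
      (le_ciSup (f := fun i => distInt (f i)) (Finite.bddAbove_range _) i) (abs_nonneg _)
      (supAbs_nonneg z)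
  calc distInt (∑ i, z i * f i) ≤ ∑ i, distInt (z i * f i) := distInt_sum_le _ _
    _ ≤ ∑ _i : Fin k, supAbs z * ⨆ i, distInt (f i) := Finset.sum_le_sum fun i _ => hle i
    _ = k * supAbs z * ⨆ i, distInt (f i) := by simp [mul_assoc]

lemma sum_mul_lform_transpose {m n : ℕ} (Θ : Matrix (Fin n) (Fin m) ℝ) (x : Fin m → ℤ)
    (y : Fin n → ℤ) : ∑ i, x i * lform Θ.transpose y i = ∑ j, y j * lform Θ x j := by
  simp only [lform, Matrix.transpose_apply, Finset.mul_sum]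
  rw [Finset.sum_comm]
  exact Finset.sum_congr rfl fun j _ => Finset.sum_congr rfl fun i _ => by ring

lemma distInt_sum_mul_le {m n : ℕ} (Θ : Matrix (Fin n) (Fin m) ℝ) (x : Fin m → ℤ)
    (y : Fin n → ℤ) (η : Fin n → ℝ) :
    distInt (∑ j, η j * y j) ≤
      n * supAbs y * (⨆ j, distInt (lform Θ x j - η j)) +
        m * supAbs x * ⨆ i, distInt (lform Θ.transpose y i) := by
  have hsplit : ∑ j, η j * y j =
      ∑ i, x i * lform Θ.transpose y i - ∑ j, y j * (lform Θ x j - η j) := by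
    rw [sum_mul_lform_transpose, ← Finset.sum_sub_distrib]
    exact Finset.sum_congr rfl fun j _ => by ring
  rw [hsplit, add_comm]
  exact (distInt_sub_le _ _).trans
    (add_le_add (distInt_sum_intCast_mul_le x _) (distInt_sum_intCast_mul_le y _))

lemma rpow_natCast_div_pow {a : ℝ} (ha : 0 ≤ a) (p : ℕ) {q : ℕ} (hq : q ≠ 0) :
    (a ^ ((p : ℝ) / q)) ^ q = a ^ p := by
  rw [← Real.rpow_natCast (a ^ _), ← Real.rpow_mul ha, div_mul_cancel₀ _ (by exact_mod_cast hq),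
    Real.rpow_natCast]

lemma pow_le_pow_of_rpow_div_le {a b : ℝ} (ha : 0 ≤ a) {p q : ℕ} (hq : q ≠ 0)
    (h : a ^ ((p : ℝ) / q) ≤ b) : a ^ p ≤ b ^ q :=
  rpow_natCast_div_pow ha p hq ▸ pow_le_pow_left₀ (Real.rpow_nonneg ha _) h q

lemma pow_le_pow_of_le_rpow_div {a b : ℝ} (ha : 0 ≤ a) (hb : 0 ≤ b) {p q : ℕ} (hq : q ≠ 0)
    (h : b ≤ a ^ ((p : ℝ) / q)) : b ^ q ≤ a ^ p :=
  rpow_natCast_div_pow ha p hq ▸ pow_le_pow_left₀ hb h q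

lemma mul_mul_le_of_pow_mul_le {n : ℕ} (hn : n ≠ 0) {c δ R X Y E : ℝ} (hc : 0 ≤ c) (hR : 0 < R)
    (hY : 0 ≤ Y) (hE : 0 ≤ E) (hRc : R ^ n * c ^ n = n ^ n * δ) (hRY : (R * Y) ^ n ≤ X)
    (hEX : E ^ n * X ≤ δ) : n * Y * E ≤ c := by
  have hpow : (n * Y * E) ^ n * R ^ n ≤ c ^ n * R ^ n :=
    calc (n * Y * E) ^ n * R ^ n = (n : ℝ) ^ n * E ^ n * (R * Y) ^ n := by ring
      _ ≤ n ^ n * E ^ n * X := by gcongr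
      _ ≤ n ^ n * δ := by rw [mul_assoc]; gcongr
      _ = c ^ n * R ^ n := by rw [← hRc, mul_comm]
  exact (pow_le_pow_iff_left₀ (by positivity) hc hn).1
    (le_of_mul_le_mul_right hpow (by positivity))

lemma pow_mul_pow_le_of_transference {m n : ℕ} (hn : n ≠ 0) {ε r₀ δ R X Y Y' E ζ : ℝ}
    (hε : 0 < ε) (hr₀ : r₀ ∈ Set.Ioo 0 1) (hR : 0 < R) (hRn : R ^ n * (ε * r₀) ^ n = n ^ n * δ)
    (hX : 0 ≤ X) (hY : 0 ≤ Y) (hY' : 0 ≤ Y') (hE : 0 ≤ E) (hζ : 0 ≤ ζ)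
    (htrans : ε ≤ n * Y * E + m * X * ζ) (hX₁ : (R * Y) ^ n ≤ X ^ m)
    (hX₂ : X ^ m ≤ (R * Y') ^ n) (happr : E ^ n * X ^ m ≤ δ) :
    ε ^ (m + n) * r₀ ^ n * (1 - r₀) ^ m / ((m : ℝ) ^ m * (n : ℝ) ^ n * δ) ≤ ζ ^ m * Y' ^ n := by
  obtain ⟨hr₀, hr₁⟩ := hr₀
  have hYE : n * Y * E ≤ ε * r₀ :=
    mul_mul_le_of_pow_mul_le hn (by positivity) hR hY hE hRn hX₁ happr
  have hXζ : ε * (1 - r₀) ≤ m * X * ζ := by linarith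
  have hδ : 0 ≤ δ := (by positivity : 0 ≤ E ^ n * X ^ m).trans happr
  refine div_le_of_le_mul₀ (by positivity) (by positivity) ?_
  calc ε ^ (m + n) * r₀ ^ n * (1 - r₀) ^ m
        = (ε * (1 - r₀)) ^ m * (ε * r₀) ^ n := by rw [mul_pow, mul_pow, pow_add]; ring
    _ ≤ (m * X * ζ) ^ m * (ε * r₀) ^ n := by gcongr
    _ = (m : ℝ) ^ m * ζ ^ m * (ε * r₀) ^ n * X ^ m := by ring
    _ ≤ (m : ℝ) ^ m * ζ ^ m * (ε * r₀) ^ n * (R * Y') ^ n := by gcongr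
    _ = ζ ^ m * Y' ^ n * ((m : ℝ) ^ m * (n : ℝ) ^ n * δ) := by
      rw [mul_assoc _ _ δ, ← hRn]; ring

theorem key_transference_step_general {m n : ℕ} (hm : 0 < m) (hn : 0 < n)
    (Θ : Matrix (Fin n) (Fin m) ℝ)
    (y : ℕ → Fin n → ℤ)
    (η : Fin n → ℝ) (ε : ℝ) (hε : 0 < ε)
    (hηε : ∀ ν, ε ≤ distInt (∑ j, η j * (y ν j : ℝ)))
    (δ : ℝ) (hδ : 0 < δ)
    (r₀ : ℝ) (hr₀ : r₀ ∈ Set.Ioo (0 : ℝ) 1)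
    (x : Fin m → ℤ) (ν : ℕ)
    (hX₁ : (((n : ℝ) * δ ^ ((1 : ℝ) / n) / (ε * r₀)) * supAbs (y ν)) ^ ((n : ℝ) / m) ≤
      supAbs x)
    (hX₂ : supAbs x <
      (((n : ℝ) * δ ^ ((1 : ℝ) / n) / (ε * r₀)) * supAbs (y (ν + 1))) ^ ((n : ℝ) / m))
    (happr : (⨆ j, distInt (lform Θ x j - η j)) ≤ (δ / (supAbs x) ^ m) ^ ((1 : ℝ) / n)) :
    ε ^ (m + n) * r₀ ^ n * (1 - r₀) ^ m / ((m : ℝ) ^ m * (n : ℝ) ^ n * δ) ≤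
      (⨆ i, distInt (lform Θ.transpose (y ν) i)) ^ m * (supAbs (y (ν + 1))) ^ n := by
  set R₀ := (n : ℝ) * δ ^ ((1 : ℝ) / n) / (ε * r₀)
  have hR₀ : 0 < R₀ := by have := hr₀.1; positivity
  have hR₀n : R₀ ^ n * (ε * r₀) ^ n = n ^ n * δ := by
    rw [← mul_pow, div_mul_cancel₀ _ (by have := hr₀.1; positivity), mul_pow,
      ← Nat.cast_one, rpow_natCast_div_pow hδ.le 1 hn.ne', pow_one]
  have hE : 0 ≤ ⨆ j, distInt (lform Θ x j - η j) := Real.iSup_nonneg fun _ => distInt_nonneg _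
  have hXm : 0 ≤ supAbs x ^ m := pow_nonneg (supAbs_nonneg x) m
  have hEX : (⨆ j, distInt (lform Θ x j - η j)) ^ n * supAbs x ^ m ≤ δ := by
    refine mul_le_of_le_div₀ hδ.le hXm ?_
    simpa only [pow_one] using
      pow_le_pow_of_le_rpow_div (p := 1) (div_nonneg hδ.le hXm) hE hn.ne' (by rwa [Nat.cast_one])
  exact pow_mul_pow_le_of_transference hn.ne' hε hr₀ hR₀ hR₀n (supAbs_nonneg _)
    (supAbs_nonneg _) (supAbs_nonneg _) hE (Real.iSup_nonneg fun _ => distInt_nonneg _)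
    ((hηε ν).trans (distInt_sum_mul_le Θ x (y ν) η))
    (pow_le_pow_of_rpow_div_le (mul_nonneg hR₀.le (supAbs_nonneg _)) hm.ne' hX₁)
    (pow_le_pow_of_le_rpow_div (mul_nonneg hR₀.le (supAbs_nonneg _)) (supAbs_nonneg _) hm.ne'
      hX₂.le) hEX

/-- The key step of the proof of Theorem 1: under the stated choice of `ν` and the
approximation assumption on `x`, one gets `ζ_ν^m Y_{ν+1}^n ≥ ε^d r₀^n (1-r₀)^m / (m^m n^n δ)`. -/
theorem key_transference_step {m n : ℕ} (hm : 0 < m) (hn : 0 < n)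
    (Θ : Matrix (Fin n) (Fin m) ℝ)
    (y : ℕ → Fin n → ℤ) (hy : IsBestApproxSeq Θ.transpose y)
    (η : Fin n → ℝ) (ε : ℝ) (hε : 0 < ε)
    (hηε : ∀ ν, ε ≤ distInt (∑ j, η j * (y ν j : ℝ)))
    (δ : ℝ) (hδ : 0 < δ)
    (r₀ : ℝ) (hr₀ : r₀ ∈ Set.Ioo (0 : ℝ) 1)
    (hr₀max : ∀ r ∈ Set.Ioo (0 : ℝ) 1, r ^ n * (1 - r) ^ m ≤ r₀ ^ n * (1 - r₀) ^ m)
    (x : Fin m → ℤ) (ν : ℕ)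
    (hX₁ : (((n : ℝ) * δ ^ ((1 : ℝ) / n) / (ε * r₀)) * supAbs (y ν)) ^ ((n : ℝ) / m) ≤
      supAbs x)
    (hX₂ : supAbs x <
      (((n : ℝ) * δ ^ ((1 : ℝ) / n) / (ε * r₀)) * supAbs (y (ν + 1))) ^ ((n : ℝ) / m))
    (happr : (⨆ j, distInt (lform Θ x j - η j)) ≤ (δ / (supAbs x) ^ m) ^ ((1 : ℝ) / n)) :
    ε ^ (m + n) * r₀ ^ n * (1 - r₀) ^ m / ((m : ℝ) ^ m * (n : ℝ) ^ n * δ) ≤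
      (⨆ i, distInt (lform Θ.transpose (y ν) i)) ^ m * (supAbs (y (ν + 1))) ^ n :=
  key_transference_step_general hm hn Θ y η ε hε hηε δ hδ r₀ hr₀ x ν hX₁ hX₂ happr
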